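/- Let w̃ ∈ W̃ and for v ∈ V, t ∈ ℝ set C_{w̃}(v,t) = exp(2t(1 − ᵗw̃)(1 − w̃))v, where ᵗw̃ is the adjoint of w̃ with respect to the inner product; this is the flow of the gradient of f_{w̃}(v) = ‖w̃(v) − v‖². Let v ∈ (V^W)^⊥ and write v = Σ_{θ∈Γ_{w̃}} v_θ with v_θ ∈ V^θ_{w̃} (using the orthogonal decomposition V = ⊕_{θ∈Γ_{w̃}} V^θ_{w̃}). If v_{θ_0} ≠ 0, where θ_0 is the minimal element of Γ_{w̃} with V^{θ_0}_{w̃} not contained in V^W, then lim_{t→−∞} C_{w̃}(v,t)/‖C_{w̃}(v,t)‖ = v_{θ_0}/‖v_{θ_0}‖. -/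

import Mathlib

/-!
Since `w̃` acts isometrically, its adjoint is `w̃⁻¹`, so the generator of the flow is
`(1 - w̃⁻¹)(1 - w̃) = 2 - (w̃ + w̃⁻¹)`, which acts on `V^θ_{w̃}` as the scalar `2 - 2 cos θ`.
Hence `C_{w̃}(v, t) = Σ_θ e^{2t(2 - 2cos θ)} v_θ`. The components are pairwise orthogonal
(eigenvectors of the symmetric operator `w̃ + w̃⁻¹` for the distinct eigenvalues `2 cos θ`),
so a component lying in `V^W` is orthogonal to `v ∈ (V^W)^⊥` and must vanish; thus every
nonzero `v_θ` has `θ ≥ θ₀`. As `t → -∞` the slowest rate `2 - 2 cos θ₀` dominates and,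
after normalization, only the direction of `v_{θ₀}` survives.
-/

open SemidirectProduct Set

section

variable {B W : Type*} [Group W]

/-- The extended group `W̃ = ⟨δ⟩ ⋉ W`. -/
abbrev Wtilde (δ : MulAut W) := W ⋊[(Subgroup.zpowers δ).subtype] ↥(Subgroup.zpowers δ)

variable {M : CoxeterMatrix B} {δ : MulAut W} (cs : CoxeterSystem M W)

/-- The length function on `W̃`, extended from `W` by `ℓ(δ^i w) = ℓ(w)`. -/
noncomputable def tlen (x : Wtilde δ) : ℕ :=
  cs.length (((x.right : MulAut W))⁻¹ x.left)

/-- One step of conjugation by a simple reflection: `w̃ →_s w̃'`. -/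
def cstep (x y : Wtilde δ) : Prop :=
  ∃ i : B, y = inl (cs.simple i) * x * inl (cs.simple i) ∧ tlen cs y ≤ tlen cs x

variable {V : Type*} [NormedAddCommGroup V] [InnerProductSpace ℝ V] [FiniteDimensional ℝ V]
variable (ρ : Wtilde δ →* (V ≃ₗᵢ[ℝ] V))

/-- The set `𝔥` of hyperplanes of `V` whose orthogonal reflection is realized by an
element of `W`. -/
noncomputable def mirrors : Set (Submodule ℝ V) :=
  {H | Module.finrank ℝ H + 1 = Module.finrank ℝ V ∧
    ∃ w : W, ρ (inl w) = Submodule.reflection H}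

/-- The complement of the union of all the reflecting hyperplanes. -/
def chamberDom : Set V := {v | ∀ H ∈ mirrors ρ, v ∉ H}

/-- A Weyl chamber: a connected component of the complement of the mirrors. -/
def IsChamber (A : Set V) : Prop :=
  ∃ v ∈ chamberDom ρ, A = connectedComponentIn (chamberDom ρ) v

/-- The hyperplane `H` separates `a` and `b`: the segment from `a` to `b` meets `H`. -/
def SepPts (H : Submodule ℝ V) (a b : V) : Prop := ∃ x ∈ segment ℝ a b, x ∈ H

/-- The set `𝔥(A, A')` of reflecting hyperplanes separating `A` and `A'`. -/
noncomputable def sepSet (A A' : Set V) : Set (Submodule ℝ V) :=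
  {H | H ∈ mirrors ρ ∧ ∀ a ∈ A, ∀ b ∈ A', SepPts H a b}

/-- `v` is a regular point of the convex set `K`: every reflecting hyperplane through `v`
contains `K`. -/
def IsRegPt (K : Set V) (v : V) : Prop :=
  v ∈ K ∧ ∀ H ∈ mirrors ρ, v ∈ H → K ⊆ (H : Set V)

/-- The submodule `V^W` of `W`-fixed points. -/
def fixedW : Submodule ℝ V where
  carrier := {v | ∀ w : W, ρ (inl w) v = v}
  add_mem' := by
    intro a b ha hb w
    simp only [map_add, ha w, hb w]
  zero_mem' := by
    intro w
    simp
  smul_mem' := by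
    intro c a ha w
    simp only [map_smul, ha w]

/-- The "eigenspace" `V^θ_{w̃} = {v | w̃ v + w̃⁻¹ v = 2 cos θ · v}`. -/
def eigSp (x : Wtilde δ) (θ : ℝ) : Submodule ℝ V where
  carrier := {v | ρ x v + ρ x⁻¹ v = (2 * Real.cos θ) • v}
  add_mem' := by
    intro a b ha hb
    simp only [Set.mem_setOf_eq, map_add] at *
    rw [smul_add, ← ha, ← hb]
    abel
  zero_mem' := by simp
  smul_mem' := by
    intro c a ha
    simp only [Set.mem_setOf_eq, map_smul] at *
    rw [← smul_add, ha, smul_comm]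

/-- `V_{w̃} = V^{θ₀}_{w̃} ∩ (V^W)^⊥`. -/
noncomputable def Vmin (x : Wtilde δ) (θ₀ : ℝ) : Submodule ℝ V :=
  eigSp ρ x θ₀ ⊓ (fixedW ρ)ᗮ

/-- The complement of the union of the mirrors containing `K`
(whose connected components house the chambers adapted to `K`). -/
def chamberDomK (K : Set V) : Set V :=
  {v | ∀ H ∈ mirrors ρ, K ⊆ (H : Set V) → v ∉ H}

/-- The face of (the chamber) `A` in the hyperplane `H`: the interior, in `H`, of `H ∩ Ā`. -/
def faceIn (H : Submodule ℝ V) (A : Set V) : Set V :=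
  Subtype.val '' (interior {h : H | (h : V) ∈ closure A})

/-- The subgroup `W_K` of `W` generated by the reflections in the mirrors containing `K`. -/
noncomputable def WKsub (K : Set V) : Subgroup W :=
  Subgroup.closure {w : W | ∃ H ∈ mirrors ρ, K ⊆ (H : Set V) ∧ ρ (inl w) = Submodule.reflection H}

end

open scoped InnerProductSpace RealInnerProductSpace
open Filter Topology

section Exponential

variable {𝕂 E : Type*} [RCLike 𝕂] [NormedAddCommGroup E] [NormedSpace 𝕂 E] [CompleteSpace E]

theorem NormedSpace.exp_apply_of_apply_eq_smul {T : E →L[𝕂] E} {c : 𝕂} {w : E}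
    (h : T w = c • w) : NormedSpace.exp T w = NormedSpace.exp c • w := by
  have hpow : ∀ n : ℕ, (T ^ n) w = c ^ n • w := by
    intro n
    induction n with
    | zero => simp
    | succ n ih => rw [pow_succ, mul_apply_eq_comp, h, map_smul, ih, smul_smul,
        ← pow_succ']
  have hT := (NormedSpace.exp_series_hasSum_exp' (𝕂 := 𝕂) T).mapL
    (ContinuousLinearMap.apply 𝕂 E w)
  have hc := (NormedSpace.exp_series_hasSum_exp' (𝕂 := 𝕂) c).smul_const w
  refine hT.unique ?_
  simpa [hpow, smul_smul] using hc

end Exponential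

section Flow

variable {E : Type*} [NormedAddCommGroup E] [NormedSpace ℝ E] [CompleteSpace E]

theorem NormedSpace.exp_smul_apply_sum {ι : Type*} (T : E →L[ℝ] E) (t : ℝ) (s : Finset ι)
    (r : ι → ℝ) (u : ι → E) (h : ∀ i ∈ s, T (u i) = r i • u i) :
    NormedSpace.exp (t • T) (∑ i ∈ s, u i) = ∑ i ∈ s, Real.exp (t * r i) • u i := by
  rw [map_sum]
  refine Finset.sum_congr rfl fun i hi => ?_
  rw [Real.exp_eq_exp_ℝ]
  refine NormedSpace.exp_apply_of_apply_eq_smul ?_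
  rw [smul_apply, h i hi, smul_smul]

end Flow

section Asymptotics

variable {E : Type*} [NormedAddCommGroup E] [NormedSpace ℝ E]

theorem norm_smul_inv_smul_of_pos {c : ℝ} (hc : 0 < c) (y : E) :
    ‖c • y‖⁻¹ • c • y = ‖y‖⁻¹ • y := by
  rw [norm_smul, Real.norm_of_nonneg hc.le, mul_inv, smul_smul, mul_comm c⁻¹, mul_assoc,
    inv_mul_cancel₀ hc.ne', mul_one]

theorem tendsto_sum_exp_mul_sub_smul_atBot {ι : Type*} {s : Finset ι} {r : ι → ℝ} {u : ι → E}
    {i₀ : ι} (hi₀ : i₀ ∈ s) (hr : ∀ i ∈ s, i ≠ i₀ → r i₀ < r i) :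
    Tendsto (fun t => ∑ i ∈ s, Real.exp (t * (r i - r i₀)) • u i) atBot (𝓝 (u i₀)) := by
  classical
  have hlim : ∀ i ∈ s, Tendsto (fun t => Real.exp (t * (r i - r i₀)) • u i) atBot
      (𝓝 (if i = i₀ then u i₀ else 0)) := by
    intro i hi
    split_ifs with h
    · subst h
      simp
    · have hexp : Tendsto (fun t => Real.exp (t * (r i - r i₀))) atBot (𝓝 0) :=
        Real.tendsto_exp_atBot.comp
          (tendsto_id.atBot_mul_const (sub_pos.mpr (hr i hi h)))
      simpa using hexp.smul_const (u i)
  simpa [Finset.sum_ite_eq', hi₀] using tendsto_finsetSum s hlim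

theorem tendsto_normalize_sum_exp_mul_smul_atBot {ι : Type*} {s : Finset ι} {r : ι → ℝ}
    {u : ι → E} {i₀ : ι} (hi₀ : i₀ ∈ s) (hr : ∀ i ∈ s, i ≠ i₀ → r i₀ < r i) (hu : u i₀ ≠ 0) :
    Tendsto (fun t => ‖∑ i ∈ s, Real.exp (t * r i) • u i‖⁻¹ • ∑ i ∈ s, Real.exp (t * r i) • u i)
      atBot (𝓝 (‖u i₀‖⁻¹ • u i₀)) := by
  have hg := tendsto_sum_exp_mul_sub_smul_atBot (u := u) hi₀ hr
  refine ((hg.norm.inv₀ (norm_ne_zero_iff.mpr hu)).smul hg).congr fun t => ?_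
  have hfactor : ∑ i ∈ s, Real.exp (t * r i) • u i =
      Real.exp (t * r i₀) • ∑ i ∈ s, Real.exp (t * (r i - r i₀)) • u i := by
    rw [Finset.smul_sum]
    refine Finset.sum_congr rfl fun i _ => ?_
    rw [smul_smul, ← Real.exp_add]
    ring_nf
  rw [hfactor, norm_smul_inv_smul_of_pos (Real.exp_pos _)]

end Asymptotics

section Isometry

variable {E : Type*} [NormedAddCommGroup E] [InnerProductSpace ℝ E]

theorem LinearIsometryEquiv.isSymmetric_add_symm (U : E ≃ₗᵢ[ℝ] E) :
    (U.toLinearEquiv.toLinearMap + U.symm.toLinearEquiv.toLinearMap).IsSymmetric := by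
  intro a b
  simp only [LinearMap.add_apply, LinearEquiv.coe_coe, LinearIsometryEquiv.coe_toLinearEquiv,
    inner_add_left, inner_add_right, U.inner_map_eq_flip, U.symm.inner_map_eq_flip, U.symm_symm]
  ring

theorem LinearIsometryEquiv.inner_eq_zero_of_add_symm_eq_smul (U : E ≃ₗᵢ[ℝ] E) {a b : E}
    {c d : ℝ} (hcd : c ≠ d) (ha : U a + U.symm a = c • a) (hb : U b + U.symm b = d • b) :
    ⟪a, b⟫ = 0 :=
  U.isSymmetric_add_symm.orthogonalFamily_eigenspaces hcd
    ⟨a, Module.End.mem_eigenspace_iff.mpr ha⟩ ⟨b, Module.End.mem_eigenspace_iff.mpr hb⟩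

theorem LinearIsometryEquiv.one_sub_adjoint_mul_one_sub_apply [CompleteSpace E]
    (U : E ≃ₗᵢ[ℝ] E) (w : E) :
    ((1 - ContinuousLinearMap.adjoint U.toLinearIsometry.toContinuousLinearMap) *
      (1 - U.toLinearIsometry.toContinuousLinearMap)) w = (2 : ℝ) • w - (U w + U.symm w) := by
  have hadj : ContinuousLinearMap.adjoint U.toLinearIsometry.toContinuousLinearMap =
      (U.symm : E →L[ℝ] E) := U.adjoint_eq_symm
  simp only [hadj, mul_apply_eq_comp, sub_apply, one_apply_eq_self]
  change w - U w - U.symm (w - U w) = _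
  rw [map_sub, U.symm_apply_apply]
  module

end Isometry

section InnerProduct

variable {𝕜 E : Type*} [RCLike 𝕜] [NormedAddCommGroup E] [InnerProductSpace 𝕜 E]

theorem Submodule.eq_zero_of_mem_of_sum_mem_orthogonal {ι : Type*} {K : Submodule 𝕜 E}
    {s : Finset ι} {u : ι → E} (horth : ∀ i ∈ s, ∀ j ∈ s, i ≠ j → ⟪u i, u j⟫_𝕜 = 0)
    (hsum : ∑ i ∈ s, u i ∈ Kᗮ) {j : ι} (hj : j ∈ s) (hK : u j ∈ K) : u j = 0 := by
  have hself : ⟪u j, ∑ i ∈ s, u i⟫_𝕜 = ⟪u j, u j⟫_𝕜 := by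
    rw [inner_sum, Finset.sum_eq_single j (fun i hi hij => horth j hj i hi hij.symm)
      (fun hj' => absurd hj hj')]
  rw [← inner_self_eq_zero (𝕜 := 𝕜), ← hself]
  exact Submodule.inner_right_of_mem_orthogonal hK hsum

end InnerProduct

section EigSp

variable {W : Type*} [Group W] {δ : MulAut W} {V : Type*} [NormedAddCommGroup V]
  [InnerProductSpace ℝ V] (ρ : Wtilde δ →* (V ≃ₗᵢ[ℝ] V)) (x : Wtilde δ)

theorem apply_add_symm_apply_of_mem_eigSp {θ : ℝ} {w : V} (hw : w ∈ eigSp ρ x θ) :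
    ρ x w + (ρ x).symm w = (2 * Real.cos θ) • w := by
  have h : ρ x w + ρ x⁻¹ w = (2 * Real.cos θ) • w := hw
  rwa [map_inv, LinearIsometryEquiv.coe_inv] at h

theorem one_sub_adjoint_mul_one_sub_apply_of_mem_eigSp [CompleteSpace V] {θ : ℝ} {w : V}
    (hw : w ∈ eigSp ρ x θ) :
    ((1 - ContinuousLinearMap.adjoint (ρ x).toLinearIsometry.toContinuousLinearMap) *
      (1 - (ρ x).toLinearIsometry.toContinuousLinearMap)) w = (2 - 2 * Real.cos θ) • w := by
  rw [LinearIsometryEquiv.one_sub_adjoint_mul_one_sub_apply,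
    apply_add_symm_apply_of_mem_eigSp ρ x hw]
  module

theorem inner_eq_zero_of_mem_eigSp {θ θ' : ℝ} (hθ : θ ∈ Icc 0 Real.pi)
    (hθ' : θ' ∈ Icc 0 Real.pi) (hne : θ ≠ θ') {w w' : V} (hw : w ∈ eigSp ρ x θ)
    (hw' : w' ∈ eigSp ρ x θ') : ⟪w, w'⟫ = 0 :=
  (ρ x).inner_eq_zero_of_add_symm_eq_smul
    (fun h => hne (Real.injOn_cos hθ hθ' (by linarith)))
    (apply_add_symm_apply_of_mem_eigSp ρ x hw) (apply_add_symm_apply_of_mem_eigSp ρ x hw')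

end EigSp

open SemidirectProduct in
theorem stmt_17_general {W : Type*} [Group W] (δ : MulAut W)
    {V : Type*} [NormedAddCommGroup V] [InnerProductSpace ℝ V] [FiniteDimensional ℝ V]
    (ρ : Wtilde δ →* (V ≃ₗᵢ[ℝ] V))
    -- the element `w̃`
    (x : Wtilde δ)
    -- the minimal angle `θ₀ ∈ Γ_{w̃}` with `V^{θ₀}_{w̃} ⊄ V^W`
    (θ₀ : ℝ)
    (hθ₀ : IsLeast {θ : ℝ | θ ∈ Set.Icc 0 Real.pi ∧ ¬ eigSp ρ x θ ≤ fixedW ρ} θ₀)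
    -- `v ∈ (V^W)^⊥`, with its orthogonal decomposition `v = Σ_{θ∈Γ_{w̃}} v_θ`
    (v : V) (hv : v ∈ (fixedW ρ)ᗮ)
    (vθ : ℝ → V) (hvθmem : ∀ θ : ℝ, vθ θ ∈ eigSp ρ x θ)
    (hvθfin : (Function.support vθ).Finite)
    (hvθrange : ∀ θ : ℝ, θ ∉ Set.Icc 0 Real.pi → vθ θ = 0)
    (hvsum : v = ∑ᶠ θ : ℝ, vθ θ)
    -- the component `v_{θ₀}` is nonzero
    (hne : vθ θ₀ ≠ 0) :
    Filter.Tendsto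
      (fun t : ℝ =>
        ‖NormedSpace.exp ((2 * t) •
            ((1 - ContinuousLinearMap.adjoint
                (ρ x).toLinearIsometry.toContinuousLinearMap) *
             (1 - (ρ x).toLinearIsometry.toContinuousLinearMap))) v‖⁻¹ •
          NormedSpace.exp ((2 * t) •
            ((1 - ContinuousLinearMap.adjoint
                (ρ x).toLinearIsometry.toContinuousLinearMap) *
             (1 - (ρ x).toLinearIsometry.toContinuousLinearMap))) v)
      Filter.atBot (nhds (‖vθ θ₀‖⁻¹ • vθ θ₀)) := by
  set T := (1 - ContinuousLinearMap.adjoint (ρ x).toLinearIsometry.toContinuousLinearMap) *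
    (1 - (ρ x).toLinearIsometry.toContinuousLinearMap)
  set s := hvθfin.toFinset
  have hs : ∀ θ, θ ∈ s ↔ vθ θ ≠ 0 := fun θ => hvθfin.mem_toFinset
  have hIcc : ∀ θ ∈ s, θ ∈ Icc 0 Real.pi := fun θ hθ =>
    by_contra fun h => (hs θ).1 hθ (hvθrange θ h)
  have horth : ∀ θ ∈ s, ∀ θ' ∈ s, θ ≠ θ' → ⟪vθ θ, vθ θ'⟫ = 0 := fun θ hθ θ' hθ' h =>
    inner_eq_zero_of_mem_eigSp ρ x (hIcc θ hθ) (hIcc θ' hθ') h (hvθmem θ) (hvθmem θ')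
  have hvs : v = ∑ θ ∈ s, vθ θ := by rw [hvsum, finsum_eq_sum vθ hvθfin]
  have hslowest : ∀ θ ∈ s, θ ≠ θ₀ → 2 - 2 * Real.cos θ₀ < 2 - 2 * Real.cos θ := by
    intro θ hθ hθne
    have hle : θ₀ ≤ θ := hθ₀.2 ⟨hIcc θ hθ, fun hfix => (hs θ).1 hθ
      (Submodule.eq_zero_of_mem_of_sum_mem_orthogonal horth (hvs ▸ hv) hθ (hfix (hvθmem θ)))⟩
    linarith [Real.strictAntiOn_cos hθ₀.1.1 (hIcc θ hθ) (hle.lt_of_ne (Ne.symm hθne))]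
  have hflow : ∀ t : ℝ, NormedSpace.exp ((2 * t) • T) v =
      ∑ θ ∈ s, Real.exp (2 * t * (2 - 2 * Real.cos θ)) • vθ θ := fun t => by
    rw [hvs]
    exact NormedSpace.exp_smul_apply_sum _ _ _ _ _ fun θ _ =>
      one_sub_adjoint_mul_one_sub_apply_of_mem_eigSp ρ x (hvθmem θ)
  refine ((tendsto_normalize_sum_exp_mul_smul_atBot
    (r := fun θ => 2 - 2 * Real.cos θ) ((hs θ₀).2 hne) hslowest hne).comp
    (tendsto_id.const_mul_atBot two_pos)).congr fun t => ?_
  simp only [Function.comp_apply, id, hflow]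

open SemidirectProduct in
/-- let `C_{w̃}(v,t) = exp(2t(1−ᵗw̃)(1−w̃)) v` be the gradient flow of
`f_{w̃}(v) = ‖w̃ v − v‖²`.  If `v ∈ (V^W)^⊥` has component `v_{θ₀} ≠ 0` in the orthogonal
decomposition `v = Σ_{θ∈Γ_{w̃}} v_θ`, where `θ₀` is the minimal element of `Γ_{w̃}` with
`V^{θ₀}_{w̃} ⊄ V^W`, then `C_{w̃}(v,t)/‖C_{w̃}(v,t)‖ → v_{θ₀}/‖v_{θ₀}‖` as `t → −∞`. -/
theorem stmt_17 {B W : Type*} [Group W] [Finite W] {M : CoxeterMatrix B}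
    (cs : CoxeterSystem M W) (δ : MulAut W)
    (hδ : (δ : W ≃* W) '' (Set.range cs.simple) = Set.range cs.simple)
    {V : Type*} [NormedAddCommGroup V] [InnerProductSpace ℝ V] [FiniteDimensional ℝ V]
    (ρ : Wtilde δ →* (V ≃ₗᵢ[ℝ] V)) (hρ : Function.Injective ρ)
    (hrefl : ∀ i : B, ∃ H : Submodule ℝ V, Module.finrank ℝ H + 1 = Module.finrank ℝ V ∧
      ρ (inl (cs.simple i)) = Submodule.reflection H)
    -- the element `w̃`
    (x : Wtilde δ)
    -- the minimal angle `θ₀ ∈ Γ_{w̃}` with `V^{θ₀}_{w̃} ⊄ V^W`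
    (θ₀ : ℝ)
    (hθ₀ : IsLeast {θ : ℝ | θ ∈ Set.Icc 0 Real.pi ∧ ¬ eigSp ρ x θ ≤ fixedW ρ} θ₀)
    -- `v ∈ (V^W)^⊥`, with its orthogonal decomposition `v = Σ_{θ∈Γ_{w̃}} v_θ`
    (v : V) (hv : v ∈ (fixedW ρ)ᗮ)
    (vθ : ℝ → V) (hvθmem : ∀ θ : ℝ, vθ θ ∈ eigSp ρ x θ)
    (hvθfin : (Function.support vθ).Finite)
    (hvθrange : ∀ θ : ℝ, θ ∉ Set.Icc 0 Real.pi → vθ θ = 0)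
    (hvsum : v = ∑ᶠ θ : ℝ, vθ θ)
    -- the component `v_{θ₀}` is nonzero
    (hne : vθ θ₀ ≠ 0) :
    Filter.Tendsto
      (fun t : ℝ =>
        ‖NormedSpace.exp ((2 * t) •
            ((1 - ContinuousLinearMap.adjoint
                (ρ x).toLinearIsometry.toContinuousLinearMap) *
             (1 - (ρ x).toLinearIsometry.toContinuousLinearMap))) v‖⁻¹ •
          NormedSpace.exp ((2 * t) •
            ((1 - ContinuousLinearMap.adjoint
                (ρ x).toLinearIsometry.toContinuousLinearMap) *
             (1 - (ρ x).toLinearIsometry.toContinuousLinearMap))) v)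
      Filter.atBot (nhds (‖vθ θ₀‖⁻¹ • vθ θ₀)) :=
  stmt_17_general δ ρ x θ₀ hθ₀ v hv vθ hvθmem hvθfin hvθrange hvsum hne
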